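/- A family Λ = {Λ_i ∈ B(X, Y_i)} is a pg-Bessel sequence for X with respect to {Y_i} if and only if the synthesis operator T_Λ : (Σ_i ⊕ Y_i^*)_{ℓ^q} → X^*, T_Λ{g_i} = Σ_i Λ_i^* g_i, is well defined and bounded; in this case Σ_i Λ_i^* g_i converges unconditionally for every {g_i} ∈ (Σ_i ⊕ Y_i^*)_{ℓ^q}. -/

import Mathlib

/-!
Forward direction: Hölder's inequality on finite sums gives
`‖∑_{i ∈ t} Λᵢ* gᵢ‖ ≤ B (∑_{i ∈ t} ‖gᵢ‖^q)^{1/q}`, so the partial sums are Cauchy in `X*`,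
which is complete whatever `X` is.

Backward direction: fix `x` and a finite set `t`, and test the synthesis bound on
`gᵢ = ‖Λᵢ x‖^{p-1} fᵢ` for `i ∈ t` (and `0` otherwise), where `fᵢ` norms `Λᵢ x`.
With `S = ∑_{i ∈ t} ‖Λᵢ x‖^p` this gives `S = (T_Λ g) x ≤ C S^{1/q} ‖x‖`, i.e. `S^{1/p} ≤ C ‖x‖`.
-/

open NormedSpace Filter

/-- The Banach-space adjoint (dual map) of a continuous linear map. -/
noncomputable def opAdj {X Y : Type*} [NormedAddCommGroup X] [NormedSpace ℝ X]
    [NormedAddCommGroup Y] [NormedSpace ℝ Y] (T : X →L[ℝ] Y) :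
    StrongDual ℝ Y →L[ℝ] StrongDual ℝ X :=
  (ContinuousLinearMap.compL ℝ X Y ℝ).flip T

lemma opAdj_apply {X Y : Type*} [NormedAddCommGroup X] [NormedSpace ℝ X]
    [NormedAddCommGroup Y] [NormedSpace ℝ Y] (T : X →L[ℝ] Y) (f : StrongDual ℝ Y) (x : X) :
    opAdj T f x = f (T x) := rfl

theorem Real.rpow_one_div_le_of_le_mul_rpow {p q S K : ℝ} (hpq : p.HolderConjugate q)
    (hS : 0 ≤ S) (hK : 0 ≤ K) (h : S ≤ K * S ^ (1 / q)) : S ^ (1 / p) ≤ K := by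
  rcases hS.eq_or_lt with rfl | hS_pos
  · rwa [Real.zero_rpow (one_div_pos.2 hpq.pos).ne']
  have hsplit : S = S ^ (1 / p) * S ^ (1 / q) := by
    rw [← Real.rpow_add hS_pos, one_div, one_div, hpq.inv_add_inv_eq_one, Real.rpow_one]
  refine le_of_mul_le_mul_right ?_ (Real.rpow_pos_of_pos hS_pos (1 / q))
  rwa [← hsplit]

theorem exists_dual_apply_eq_norm_rpow {E : Type*} [SeminormedAddCommGroup E] [NormedSpace ℝ E]
    {p q : ℝ} (hpq : p.HolderConjugate q) (y : E) :
    ∃ f : StrongDual ℝ E, ‖f‖ ^ q ≤ ‖y‖ ^ p ∧ f y = ‖y‖ ^ p := by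
  obtain ⟨f, hf, hfy⟩ := exists_dual_vector'' ℝ y
  refine ⟨‖y‖ ^ (p - 1) • f, ?_, ?_⟩
  · have hnorm : ‖‖y‖ ^ (p - 1) • f‖ ≤ ‖y‖ ^ (p - 1) := by
      rw [norm_smul, Real.norm_of_nonneg (by positivity)]
      exact mul_le_of_le_one_right (by positivity) hf
    calc ‖‖y‖ ^ (p - 1) • f‖ ^ q ≤ (‖y‖ ^ (p - 1)) ^ q :=
          Real.rpow_le_rpow (norm_nonneg _) hnorm hpq.symm.nonneg
      _ = ‖y‖ ^ p := by rw [← Real.rpow_mul (norm_nonneg _), hpq.sub_one_mul_conj]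
  · rw [smul_apply, hfy, smul_eq_mul, RCLike.ofReal_real_eq_id, id,
      ← Real.rpow_add_one' (norm_nonneg _) (by simpa using hpq.ne_zero), sub_add_cancel]

section Summation

variable {ι : Type*}

theorem summable_and_tsum_rpow_le_iff {a : ι → ℝ} (ha : 0 ≤ a) {r M : ℝ} (hr : 0 < r)
    (hM : 0 ≤ M) :
    (Summable a ∧ (∑' i, a i) ^ r ≤ M) ↔ ∀ t : Finset ι, (∑ i ∈ t, a i) ^ r ≤ M := by
  constructor
  · rintro ⟨hs, hle⟩ t
    exact (Real.rpow_le_rpow (Finset.sum_nonneg fun i _ => ha i)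
      (hs.sum_le_tsum t fun i _ => ha i) hr.le).trans hle
  · intro h
    have hsum : ∀ t : Finset ι, ∑ i ∈ t, a i ≤ M ^ r⁻¹ := fun t => by
      rw [Real.le_rpow_inv_iff_of_pos (Finset.sum_nonneg fun i _ => ha i) hM hr]
      exact h t
    refine ⟨summable_of_sum_le ha hsum, ?_⟩
    rw [← Real.le_rpow_inv_iff_of_pos (tsum_nonneg ha) hM hr]
    exact Real.tsum_le_of_sum_le ha hsum

variable {E : Type*} [SeminormedAddCommGroup E] {F : ι → E} {a : ι → ℝ} {B r : ℝ}

theorem summable_of_norm_sum_le_mul_rpow [CompleteSpace E] (ha : Summable a) (hr : 0 < r)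
    (h : ∀ t : Finset ι, ‖∑ i ∈ t, F i‖ ≤ B * (∑ i ∈ t, a i) ^ r) : Summable F := by
  rw [summable_iff_vanishing_norm]
  intro ε hε
  have hcont : ContinuousAt (fun s : ℝ => B * s ^ r) 0 :=
    (Real.continuousAt_rpow_const 0 r (Or.inr hr.le)).const_mul B
  obtain ⟨δ, hδ, hδε⟩ := Metric.continuousAt_iff.1 hcont ε hε
  obtain ⟨s, hs⟩ := summable_iff_vanishing_norm.1 ha δ hδ
  refine ⟨s, fun t ht => (h t).trans_lt ((le_abs_self _).trans_lt ?_)⟩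
  simpa [Real.dist_eq, Real.zero_rpow hr.ne'] using
    hδε (x := ∑ i ∈ t, a i) (by simpa using hs t ht)

theorem norm_tsum_le_mul_rpow_of_norm_sum_le (ha₀ : 0 ≤ a) (ha : Summable a) (hF : Summable F)
    (hB : 0 ≤ B) (hr : 0 ≤ r) (h : ∀ t : Finset ι, ‖∑ i ∈ t, F i‖ ≤ B * (∑ i ∈ t, a i) ^ r) :
    ‖∑' i, F i‖ ≤ B * (∑' i, a i) ^ r :=
  le_of_tendsto' hF.hasSum.norm fun t => (h t).trans <| mul_le_mul_of_nonneg_left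
    (Real.rpow_le_rpow (Finset.sum_nonneg fun i _ => ha₀ i) (ha.sum_le_tsum t fun i _ => ha₀ i) hr)
    hB

end Summation

section Synthesis

variable {ι : Type*} {X : Type*} [NormedAddCommGroup X] [NormedSpace ℝ X]
  {Y : ι → Type*} [∀ i, NormedAddCommGroup (Y i)] [∀ i, NormedSpace ℝ (Y i)]
  {p q : ℝ} (Λ : ∀ i, X →L[ℝ] Y i)

theorem norm_sum_opAdj_le (hpq : p.HolderConjugate q) {B : ℝ} (hB : 0 ≤ B)
    (hΛ : ∀ x (t : Finset ι), (∑ i ∈ t, ‖Λ i x‖ ^ p) ^ (1 / p) ≤ B * ‖x‖)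
    (g : ∀ i, StrongDual ℝ (Y i)) (t : Finset ι) :
    ‖∑ i ∈ t, opAdj (Λ i) (g i)‖ ≤ B * (∑ i ∈ t, ‖g i‖ ^ q) ^ (1 / q) := by
  refine ContinuousLinearMap.opNorm_le_bound _ (by positivity) fun x => ?_
  calc ‖(∑ i ∈ t, opAdj (Λ i) (g i)) x‖ ≤ ∑ i ∈ t, ‖g i‖ * ‖Λ i x‖ := by
        rw [sum_apply]
        exact (norm_sum_le _ _).trans (Finset.sum_le_sum fun i _ => (g i).le_opNorm (Λ i x))
    _ ≤ (∑ i ∈ t, ‖g i‖ ^ q) ^ (1 / q) * (∑ i ∈ t, ‖Λ i x‖ ^ p) ^ (1 / p) :=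
        Real.inner_le_Lp_mul_Lq_of_nonneg t hpq.symm (fun i _ => norm_nonneg _)
          fun i _ => norm_nonneg _
    _ ≤ (∑ i ∈ t, ‖g i‖ ^ q) ^ (1 / q) * (B * ‖x‖) :=
        mul_le_mul_of_nonneg_left (hΛ x t) (by positivity)
    _ = B * (∑ i ∈ t, ‖g i‖ ^ q) ^ (1 / q) * ‖x‖ := by ring

theorem sum_norm_rpow_le_of_norm_tsum_opAdj_le (hpq : p.HolderConjugate q) {C : ℝ} (hC : 0 ≤ C)
    (hbound : ∀ g : ∀ i, StrongDual ℝ (Y i), Summable (fun i => ‖g i‖ ^ q) →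
      ‖∑' i, opAdj (Λ i) (g i)‖ ≤ C * (∑' i, ‖g i‖ ^ q) ^ (1 / q))
    (x : X) (t : Finset ι) : (∑ i ∈ t, ‖Λ i x‖ ^ p) ^ (1 / p) ≤ C * ‖x‖ := by
  classical
  choose f hf hfx using fun i => exists_dual_apply_eq_norm_rpow hpq (Λ i x)
  set S := ∑ i ∈ t, ‖Λ i x‖ ^ p
  set g : ∀ i, StrongDual ℝ (Y i) := t.piecewise f 0
  have hg_in : ∀ i ∈ t, g i = f i := fun i hi => t.piecewise_eq_of_mem _ _ hi
  have hg_out : ∀ i ∉ t, g i = 0 := fun i hi => t.piecewise_eq_of_notMem _ _ hi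
  have hq : q ≠ 0 := hpq.symm.ne_zero
  have hg_norm : ∑' i, ‖g i‖ ^ q ≤ S := by
    rw [tsum_eq_sum fun i hi => by rw [hg_out i hi, norm_zero, Real.zero_rpow hq]]
    exact Finset.sum_le_sum fun i hi => hg_in i hi ▸ hf i
  have hg_summable : Summable fun i => ‖g i‖ ^ q :=
    summable_of_ne_finset_zero fun i hi => by rw [hg_out i hi, norm_zero, Real.zero_rpow hq]
  have hTg : ∑' i, opAdj (Λ i) (g i) = ∑ i ∈ t, opAdj (Λ i) (g i) :=
    tsum_eq_sum fun i hi => by rw [hg_out i hi, map_zero]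
  have hTgx : (∑ i ∈ t, opAdj (Λ i) (g i)) x = S := by
    rw [sum_apply]
    exact Finset.sum_congr rfl fun i hi => by rw [opAdj_apply, hg_in i hi, hfx]
  refine Real.rpow_one_div_le_of_le_mul_rpow hpq (by positivity) (by positivity) ?_
  calc S ≤ ‖(∑ i ∈ t, opAdj (Λ i) (g i)) x‖ := hTgx ▸ le_abs_self S
    _ ≤ ‖∑ i ∈ t, opAdj (Λ i) (g i)‖ * ‖x‖ := ContinuousLinearMap.le_opNorm _ _
    _ ≤ C * (∑' i, ‖g i‖ ^ q) ^ (1 / q) * ‖x‖ := by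
        gcongr
        exact hTg ▸ hbound g hg_summable
    _ ≤ C * S ^ (1 / q) * ‖x‖ := by
        gcongr
        exact one_div_nonneg.2 hpq.symm.nonneg
    _ = C * ‖x‖ * S ^ (1 / q) := by ring

end Synthesis

theorem pgBessel_iff_synthesis_bounded_general
    {X : Type*} [NormedAddCommGroup X] [NormedSpace ℝ X]
    {Y : ℕ → Type*} [∀ i, NormedAddCommGroup (Y i)] [∀ i, NormedSpace ℝ (Y i)]
    (p q : ℝ) (hp : 1 < p) (hpq : 1 / p + 1 / q = 1)
    (Λ : ∀ i, X →L[ℝ] Y i) :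
    (∃ B > (0 : ℝ), ∀ x : X, Summable (fun i => ‖Λ i x‖ ^ p) ∧
        (∑' i, ‖Λ i x‖ ^ p) ^ (1 / p) ≤ B * ‖x‖) ↔
      ((∀ g : ∀ i, StrongDual ℝ (Y i), Summable (fun i => ‖g i‖ ^ q) →
          Summable (fun i => opAdj (Λ i) (g i))) ∧
        (∃ C > (0 : ℝ), ∀ g : ∀ i, StrongDual ℝ (Y i), Summable (fun i => ‖g i‖ ^ q) →
          ‖∑' i, opAdj (Λ i) (g i)‖ ≤ C * (∑' i, ‖g i‖ ^ q) ^ (1 / q))) := by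
  have hconj : p.HolderConjugate q :=
    Real.holderConjugate_iff.mpr ⟨hp, by simpa only [one_div] using hpq⟩
  have hp₀ : 0 < 1 / p := one_div_pos.2 hconj.pos
  have hq₀ : 0 < 1 / q := one_div_pos.2 hconj.symm.pos
  have hbessel_iff (x : X) {M : ℝ} (hM : 0 ≤ M) :=
    summable_and_tsum_rpow_le_iff (a := fun i => ‖Λ i x‖ ^ p) (fun i => by positivity) hp₀ hM
  constructor
  · rintro ⟨B, hB, hΛ⟩
    have hsum_le :=
      norm_sum_opAdj_le Λ hconj hB.le fun x => (hbessel_iff x (by positivity)).1 (hΛ x)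
    have hsummable : ∀ g : ∀ i, StrongDual ℝ (Y i), Summable (fun i => ‖g i‖ ^ q) →
        Summable (fun i => opAdj (Λ i) (g i)) :=
      fun g hg => summable_of_norm_sum_le_mul_rpow hg hq₀ (hsum_le g)
    exact ⟨hsummable, B, hB, fun g hg => norm_tsum_le_mul_rpow_of_norm_sum_le
      (fun i => by positivity) hg (hsummable g hg) hB.le hq₀.le (hsum_le g)⟩
  · rintro ⟨-, C, hC, hbound⟩
    exact ⟨C, hC, fun x => (hbessel_iff x (by positivity)).2
      (sum_norm_rpow_le_of_norm_tsum_opAdj_le Λ hconj hC.le hbound x)⟩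

/-- `Λ` is a pg-Bessel sequence iff the synthesis operator
`T_Λ {gᵢ} = Σᵢ Λᵢ* gᵢ` is well defined (the series converges unconditionally, i.e. is
summable, for every `{gᵢ} ∈ (Σᵢ ⊕ Yᵢ*)_{ℓᑫ}`) and bounded. -/
theorem pgBessel_iff_synthesis_bounded
    {X : Type*} [NormedAddCommGroup X] [NormedSpace ℝ X] [CompleteSpace X]
    {Y : ℕ → Type*} [∀ i, NormedAddCommGroup (Y i)] [∀ i, NormedSpace ℝ (Y i)]
    [∀ i, CompleteSpace (Y i)]
    (p q : ℝ) (hp : 1 < p) (hpq : 1 / p + 1 / q = 1)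
    (Λ : ∀ i, X →L[ℝ] Y i) :
    (∃ B > (0 : ℝ), ∀ x : X, Summable (fun i => ‖Λ i x‖ ^ p) ∧
        (∑' i, ‖Λ i x‖ ^ p) ^ (1 / p) ≤ B * ‖x‖) ↔
      ((∀ g : ∀ i, StrongDual ℝ (Y i), Summable (fun i => ‖g i‖ ^ q) →
          Summable (fun i => opAdj (Λ i) (g i))) ∧
        (∃ C > (0 : ℝ), ∀ g : ∀ i, StrongDual ℝ (Y i), Summable (fun i => ‖g i‖ ^ q) →
          ‖∑' i, opAdj (Λ i) (g i)‖ ≤ C * (∑' i, ‖g i‖ ^ q) ^ (1 / q))) :=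
  pgBessel_iff_synthesis_bounded_general p q hp hpq Λ
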